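/- For fixed t1, if t2 ↦ S(t1,t2) = C·(t2-t1) - Σ_a h_a·MI(t1,t2,a) attains a strict local minimum at t2* (with left derivative < 0 < right derivative), then t2* ∈ {e_min(a) : a ∈ A} ∪ {e_max(a) : a ∈ A} ∪ {s_min(a) + e_max(a) - t1 : a ∈ A}. -/

import Mathlib

/-- Minimum intersection of an activity (sMin, sMax, p) with interval [t1,t2]. -/
noncomputable def MI (sMin sMax p t1 t2 : ℝ) : ℝ :=
  max 0 (min (min p (t2 - t1)) (min (sMin + p - t1) (t2 - sMax)))

/-- Left derivative. -/
noncomputable def leftD (f : ℝ → ℝ) (x : ℝ) : ℝ := derivWithin f (Set.Iio x) x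

/-- Right derivative. -/
noncomputable def rightD (f : ℝ → ℝ) (x : ℝ) : ℝ := derivWithin f (Set.Ioi x) x

/-!
As a function of `t2`, `MI` is a ramp: zero up to `m = max t1 sMax`, of slope one up to
`m + c` with `c = min p (sMin + p - t1)`, and constant afterwards. So the left derivative
of the slack at `x` is `C - ∑ h a · [x ∈ (m a, m a + c a]]` and the right derivative is
`C - ∑ h a · [x ∈ [m a, m a + c a)]`. Since the weights are nonnegative, the left
derivative can only be smaller than the right one if `x` is the top end `m a + c a` of
some ramp, and unfolding `max` and `min` puts that point in the three families.
-/

open Set Filter Topology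

noncomputable def ramp (c m t : ℝ) : ℝ := max 0 (min c (t - m))

lemma ramp_of_le {c m t : ℝ} (ht : t ≤ m) : ramp c m t = 0 :=
  max_eq_left ((min_le_right _ _).trans (by linarith))

lemma ramp_of_mem_Icc {c m t : ℝ} (ht : t ∈ Icc m (m + c)) : ramp c m t = t - m := by
  obtain ⟨hmt, htc⟩ := ht
  rw [ramp, min_eq_right (by linarith), max_eq_right (by linarith)]

lemma ramp_of_ge {c m t : ℝ} (ht : m + c ≤ t) : ramp c m t = max 0 c := by
  rw [ramp, min_eq_left (by linarith)]

lemma MI_eq_ramp (sMin sMax p t1 t2 : ℝ) :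
    MI sMin sMax p t1 t2 = ramp (min p (sMin + p - t1)) (max t1 sMax) t2 := by
  rw [MI, ramp, min_min_min_comm]
  congr 2
  rcases le_total t1 sMax with hts | hts
  · rw [max_eq_right hts, min_eq_right (by linarith)]
  · rw [max_eq_left hts, min_eq_left (by linarith)]

lemma hasDerivWithinAt_of_eventually_eq_affine {f : ℝ → ℝ} {s : Set ℝ} {x k : ℝ}
    (hf : ∀ᶠ t in 𝓝[s] x, f t = f x + k * (t - x)) : HasDerivWithinAt f k s x := by
  have hline : HasDerivAt (fun t => f x + k * (t - x)) k x := by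
    simpa using (((hasDerivAt_id x).sub_const x).const_mul k).const_add (f x)
  exact hline.hasDerivWithinAt.congr_of_eventuallyEq hf (by simp)

lemma hasDerivWithinAt_ramp_Iio (c m x : ℝ) :
    HasDerivWithinAt (ramp c m) ((Ioc m (m + c)).indicator 1 x) (Iio x) x := by
  apply hasDerivWithinAt_of_eventually_eq_affine
  rcases le_or_gt x m with hxm | hmx
  · filter_upwards [self_mem_nhdsWithin] with t (ht : t < x)
    rw [indicator_of_notMem (fun hx => hx.1.not_ge hxm), ramp_of_le hxm,
      ramp_of_le (by linarith)]
    ring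
  rcases le_or_gt x (m + c) with hxc | hcx
  · filter_upwards [Ioo_mem_nhdsLT hmx] with t ht
    rw [indicator_of_mem (show x ∈ Ioc m (m + c) from ⟨hmx, hxc⟩),
      ramp_of_mem_Icc ⟨hmx.le, hxc⟩, ramp_of_mem_Icc ⟨ht.1.le, by linarith [ht.2]⟩]
    simp
  · filter_upwards [Ioo_mem_nhdsLT hcx] with t ht
    rw [indicator_of_notMem (fun hx => hx.2.not_gt hcx), ramp_of_ge hcx.le,
      ramp_of_ge ht.1.le]
    ring

lemma hasDerivWithinAt_ramp_Ioi (c m x : ℝ) :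
    HasDerivWithinAt (ramp c m) ((Ico m (m + c)).indicator 1 x) (Ioi x) x := by
  apply hasDerivWithinAt_of_eventually_eq_affine
  rcases lt_or_ge x m with hxm | hmx
  · filter_upwards [Ioo_mem_nhdsGT hxm] with t ht
    rw [indicator_of_notMem (fun hx => hx.1.not_gt hxm), ramp_of_le hxm.le,
      ramp_of_le ht.2.le]
    ring
  rcases lt_or_ge x (m + c) with hxc | hcx
  · filter_upwards [Ioo_mem_nhdsGT hxc] with t ht
    rw [indicator_of_mem (show x ∈ Ico m (m + c) from ⟨hmx, hxc⟩),
      ramp_of_mem_Icc ⟨hmx, hxc.le⟩, ramp_of_mem_Icc ⟨by linarith [ht.1], ht.2.le⟩]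
    simp
  · filter_upwards [self_mem_nhdsWithin] with t (ht : x < t)
    rw [indicator_of_notMem (fun hx => hx.2.not_ge hcx), ramp_of_ge hcx,
      ramp_of_ge (by linarith)]
    ring

lemma eq_of_indicator_Ico_lt_indicator_Ioc {a b x : ℝ}
    (h : (Ico a b).indicator 1 x < (Ioc a b).indicator (1 : ℝ → ℝ) x) : x = b := by
  simp only [indicator_apply, mem_Ico, mem_Ioc, Pi.one_apply] at h
  split_ifs at h with hIco hIoc hIoc <;> norm_num at h
  exact le_antisymm hIoc.2 (not_lt.1 fun hxb => hIco ⟨hIoc.1.le, hxb⟩)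

theorem exists_eq_ramp_top_of_leftD_lt_rightD {ι : Type*} (A : Finset ι) (c m h : ι → ℝ)
    (hh : ∀ a ∈ A, 0 ≤ h a) {g : ℝ → ℝ} {g' x : ℝ} (hg : HasDerivAt g g' x)
    (hlt : leftD (fun t => g t - ∑ a ∈ A, h a * ramp (c a) (m a) t) x
      < rightD (fun t => g t - ∑ a ∈ A, h a * ramp (c a) (m a) t) x) :
    ∃ a ∈ A, x = m a + c a := by
  have hderiv : ∀ (s : Set ℝ) (d : ι → ℝ),
      (∀ a, HasDerivWithinAt (ramp (c a) (m a)) (d a) s x) →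
      HasDerivWithinAt (fun t => g t - ∑ a ∈ A, h a * ramp (c a) (m a) t)
        (g' - ∑ a ∈ A, h a * d a) s x := fun s d hd =>
    hg.hasDerivWithinAt.sub (HasDerivWithinAt.fun_sum fun a _ => (hd a).const_mul (h a))
  rw [leftD, rightD,
    (hderiv _ _ fun a => hasDerivWithinAt_ramp_Iio _ _ x).derivWithin (uniqueDiffWithinAt_Iio x),
    (hderiv _ _ fun a => hasDerivWithinAt_ramp_Ioi _ _ x).derivWithin (uniqueDiffWithinAt_Ioi x),
    sub_lt_sub_iff_left] at hlt
  obtain ⟨a, ha, hlt_a⟩ := Finset.exists_lt_of_sum_lt hlt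
  exact ⟨a, ha, eq_of_indicator_Ico_lt_indicator_Ioc (lt_of_mul_lt_mul_left hlt_a (hh a ha))⟩

lemma max_add_min_eq_or {sMin sMax p t1 : ℝ} (hs : sMin ≤ sMax) :
    max t1 sMax + min p (sMin + p - t1) = sMin + p ∨
      max t1 sMax + min p (sMin + p - t1) = sMax + p ∨
      max t1 sMax + min p (sMin + p - t1) = sMin + (sMax + p) - t1 := by
  rcases le_total t1 sMin with h₁ | h₁
  · rw [max_eq_right (h₁.trans hs), min_eq_left (by linarith)]
    exact Or.inr (Or.inl rfl)
  rcases le_total t1 sMax with h₂ | h₂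
  · rw [max_eq_right h₂, min_eq_right (by linarith)]
    exact Or.inr (Or.inr (by ring))
  · rw [max_eq_left h₂, min_eq_right (by linarith)]
    exact Or.inl (by ring)

theorem slack_local_min_location_general {ι : Type*} (A : Finset ι)
    (sMin sMax p h : ι → ℝ) (C t1 : ℝ)
    (hs : ∀ a ∈ A, sMin a ≤ sMax a)
    (hh : ∀ a ∈ A, 0 < h a) :
    ∀ t2s : ℝ,
      IsLocalMin (fun t2 => C * (t2 - t1) -
        ∑ a ∈ A, h a * MI (sMin a) (sMax a) (p a) t1 t2) t2s →
      leftD (fun t2 => C * (t2 - t1) -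
        ∑ a ∈ A, h a * MI (sMin a) (sMax a) (p a) t1 t2) t2s < 0 →
      0 < rightD (fun t2 => C * (t2 - t1) -
        ∑ a ∈ A, h a * MI (sMin a) (sMax a) (p a) t1 t2) t2s →
      ∃ a ∈ A,
        t2s = sMin a + p a ∨ t2s = sMax a + p a ∨
        t2s = sMin a + (sMax a + p a) - t1 := by
  intro x _ hL hR
  simp only [MI_eq_ramp] at hL hR
  have hC : HasDerivAt (fun t => C * (t - t1)) C x := by
    simpa using ((hasDerivAt_id x).sub_const t1).const_mul C
  obtain ⟨a, ha, hx⟩ := exists_eq_ramp_top_of_leftD_lt_rightD A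
    (fun a => min (p a) (sMin a + p a - t1)) (fun a => max t1 (sMax a)) h
    (fun a ha => (hh a ha).le) hC (hL.trans hR)
  exact ⟨a, ha, hx ▸ max_add_min_eq_or (hs a ha)⟩

theorem slack_local_min_location {ι : Type*} (A : Finset ι)
    (sMin sMax p h : ι → ℝ) (C t1 : ℝ)
    (hs : ∀ a ∈ A, sMin a ≤ sMax a) (hp : ∀ a ∈ A, 0 ≤ p a)
    (hh : ∀ a ∈ A, 0 < h a) :
    ∀ t2s : ℝ,
      IsLocalMin (fun t2 => C * (t2 - t1) -
        ∑ a ∈ A, h a * MI (sMin a) (sMax a) (p a) t1 t2) t2s →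
      leftD (fun t2 => C * (t2 - t1) -
        ∑ a ∈ A, h a * MI (sMin a) (sMax a) (p a) t1 t2) t2s < 0 →
      0 < rightD (fun t2 => C * (t2 - t1) -
        ∑ a ∈ A, h a * MI (sMin a) (sMax a) (p a) t1 t2) t2s →
      ∃ a ∈ A,
        t2s = sMin a + p a ∨ t2s = sMax a + p a ∨
        t2s = sMin a + (sMax a + p a) - t1 :=
  slack_local_min_location_general A sMin sMax p h C t1 hs hh
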